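/- arXiv:0912.4357 — 2 statements merged into one kernel-verified Lean document; each statement's English description precedes it below -/
import Mathlib

section
/- Let 0≤n≤N be integers. Then the q-Hahn polynomials satisfy the q-difference equations: (i) for N≥n+1, (R_{N−1}Q_n(·;α,β,N−1|q))(x)=(q^{−N+n}−1)·Q_n(x;α,β,N|q) for all 0≤x≤N; (ii) (L_{N+1}Q_n(·;α,β,N+1|q))(x)=q^{−n}(αβq^{N+n+2}−1)·Q_n(x;α,β,N|q) for all 0≤x≤N; (iii) (D_N Q_n(·;α,β,N|q))(x)=q^{−n}(1−q^n)(1−αβq^{n+1})·Q_n(x;α,β,N|q) for all 0≤x≤N. -/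
open Finset

noncomputable section

/-- q-shifted factorial `(a;q)_m`. -/
def qPoch (q a : ℝ) (m : ℕ) : ℝ := ∏ k ∈ Finset.range m, (1 - a * q ^ k)

/-- Two-variable raising operator `R_M : V_{2,M} → V_{2,M+1}` (on functions of `x = x₁`). -/
def R2 (q : ℝ) (M : ℕ) (g : ℕ → ℂ) : ℕ → ℂ := fun x =>
  (q : ℂ) ^ (-(M : ℤ) - 1) * (1 - (q : ℂ) ^ x) * g (x - 1) +
    (q : ℂ) ^ ((x : ℤ) - M - 1) * (1 - (q : ℂ) ^ ((M : ℤ) + 1 - x)) * g x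

/-- `R2Iter q n k g = R_{n+k-1} ⋯ R_{n+1} R_n g`. -/
def R2Iter (q : ℝ) (n : ℕ) : ℕ → (ℕ → ℂ) → (ℕ → ℂ)
  | 0, g => g
  | k + 1, g => R2 q (n + k) (R2Iter q n k g)

/-- The function `φ_n(x) = q^{-n²/2}(q;q)_n (abq^{n+1})^x (b⁻¹q^{-n};q)_x / (aq;q)_x`. -/
def phiH (q a b : ℝ) (n : ℕ) : ℕ → ℂ := fun x =>
  ((q ^ (-((n : ℝ) ^ 2) / 2) * qPoch q q n * (a * b * q ^ (n + 1)) ^ x *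
      qPoch q (b⁻¹ * q ^ (-(n : ℤ))) x / qPoch q (a * q) x : ℝ) : ℂ)

/-- The one-dimensional q-Hahn polynomial `Q_n(x; a, b, N | q)`. -/
def qHahnQ (q a b : ℝ) (n N : ℕ) : ℕ → ℂ := fun x =>
  ((q : ℂ) ^ ((N - n) * (N - n + 1) / 2) / ((qPoch q q (N - n) : ℝ) : ℂ)) *
    R2Iter q n (N - n) (phiH q a b n) x

/-- Two-variable lowering operator `L_M : V_{2,M} → V_{2,M-1}` with parameters `(a,b)`. -/
def L2 (q a b : ℝ) (M : ℕ) (g : ℕ → ℂ) : ℕ → ℂ := fun x =>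
  ((a : ℂ) * (q : ℂ) ^ (x + 1) - 1) * g (x + 1) +
    (a : ℂ) * (q : ℂ) ^ (x + 1) * ((b : ℂ) * (q : ℂ) ^ ((M : ℤ) - x) - 1) * g x

/-- Two-variable q-Hahn operator `D_M : V_{2,M} → V_{2,M}` with parameters `(a,b)`. -/
def D2 (q a b : ℝ) (M : ℕ) (g : ℕ → ℂ) : ℕ → ℂ := fun x =>
  (1 - (a : ℂ) * (q : ℂ) ^ (x + 1)) * (1 - (q : ℂ) ^ ((x : ℤ) - M)) * g (x + 1) -
    ((1 - (a : ℂ) * (q : ℂ) ^ (x + 1)) * (1 - (q : ℂ) ^ ((x : ℤ) - M)) +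
      (q : ℂ) * (a : ℂ) * (1 - (q : ℂ) ^ x) * ((b : ℂ) - (q : ℂ) ^ ((x : ℤ) - M - 1))) * g x +
    (q : ℂ) * (a : ℂ) * (1 - (q : ℂ) ^ x) * ((b : ℂ) - (q : ℂ) ^ ((x : ℤ) - M - 1)) * g (x - 1)


/-!
The operators satisfy the intertwining relations `D_{M+1} R_M = R_M D_M` and
`L_{M+1} R_M = D_M + (1 - q^{-M-1})(1 - αβq^{M+2})`, both polynomial identities in `q^x` once the
integer powers of `q` are cleared. The ratio `φ_n(x+1)/φ_n(x) = αq(βq^n - q^x)/(1 - αq^{x+1})`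
makes `φ_n` an eigenfunction of `D_n`, and by the first relation every `Q_n(·; N)` is an
eigenfunction of `D_N` with the same eigenvalue: this is (iii). Since `Q_n(·; N+1)` is a multiple
of `R_N Q_n(·; N)` with ratio `q^{N-n+1}/(1 - q^{N-n+1})`, part (i) is that ratio and part (ii)
follows from the second relation and (iii).
-/

lemma qPoch_succ (q c : ℝ) (m : ℕ) : qPoch q c (m + 1) = qPoch q c m * (1 - c * q ^ m) :=
  Finset.prod_range_succ _ _

lemma qPoch_self_pos {q : ℝ} (hq0 : 0 ≤ q) (hq1 : q < 1) (m : ℕ) : 0 < qPoch q q m :=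
  Finset.prod_pos fun k _ => by
    have : q * q ^ k < 1 := by rw [← pow_succ']; exact pow_lt_one₀ hq0 hq1 k.succ_ne_zero
    linarith

section Operators

variable {q : ℝ} (a b : ℝ) (M : ℕ)

lemma R2_const_mul (c : ℂ) (g : ℕ → ℂ) (x : ℕ) :
    R2 q M (fun y => c * g y) x = c * R2 q M g x := by
  simp only [R2]; ring

lemma L2_const_mul (c : ℂ) (g : ℕ → ℂ) (x : ℕ) :
    L2 q a b M (fun y => c * g y) x = c * L2 q a b M g x := by
  simp only [L2]; ring

lemma D2_const_mul (c : ℂ) (g : ℕ → ℂ) (x : ℕ) :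
    D2 q a b M (fun y => c * g y) x = c * D2 q a b M g x := by
  simp only [D2]; ring

lemma R2_congr {g g' : ℕ → ℂ} {x : ℕ} (h : ∀ y ≤ x, g y = g' y) :
    R2 q M g x = R2 q M g' x := by
  simp only [R2, h x le_rfl, h (x - 1) (Nat.sub_le x 1)]

-- `x - 1` truncates at `x = 0`, where the coefficient `1 - q^x` of `g (x - 1)` vanishes;
-- hence the split on `x`.
lemma D2_succ_R2 (hq : q ≠ 0) (g : ℕ → ℂ) (x : ℕ) :
    D2 q a b (M + 1) (R2 q M g) x = R2 q M (D2 q a b M g) x := by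
  have hq' : (q : ℂ) ≠ 0 := by exact_mod_cast hq
  rcases x with _ | x <;>
  · simp only [D2, R2]
    push_cast
    simp only [zpow_sub₀ hq', zpow_add₀ hq', zpow_neg, zpow_natCast, zpow_one]
    field_simp
    ring

lemma L2_succ_R2 (hq : q ≠ 0) (g : ℕ → ℂ) (x : ℕ) :
    L2 q a b (M + 1) (R2 q M g) x =
      D2 q a b M g x +
        (1 - (q : ℂ) ^ (-(M : ℤ) - 1)) * (1 - a * b * (q : ℂ) ^ (M + 2)) * g x := by
  have hq' : (q : ℂ) ≠ 0 := by exact_mod_cast hq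
  rcases x with _ | x <;>
  · simp only [D2, R2, L2]
    push_cast
    simp only [zpow_sub₀ hq', zpow_add₀ hq', zpow_neg, zpow_natCast, zpow_one]
    field_simp
    ring

end Operators

def qHahnEigenvalue (q a b : ℝ) (n : ℕ) : ℂ :=
  (q : ℂ) ^ (-(n : ℤ)) * (1 - (q : ℂ) ^ n) * (1 - (a : ℂ) * (b : ℂ) * (q : ℂ) ^ (n + 1))

section Eigenfunctions

variable {q : ℝ} (a b : ℝ)

lemma phiH_succ (hq : q ≠ 0) (hb : b ≠ 0) (n x : ℕ) (hx : 1 - a * q * q ^ x ≠ 0) :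
    phiH q a b n (x + 1) * (1 - a * q * q ^ x) =
      a * q * (b * q ^ n - q ^ x) * phiH q a b n x := by
  have hx' : (1 - a * q * q ^ x : ℂ) ≠ 0 := by exact_mod_cast hx
  have hq' : (q : ℂ) ≠ 0 := by exact_mod_cast hq
  have hb' : (b : ℂ) ≠ 0 := by exact_mod_cast hb
  simp only [phiH, qPoch_succ]
  push_cast
  generalize ((qPoch q (a * q) x : ℝ) : ℂ) = P
  rw [div_mul_eq_mul_div, mul_div_mul_right _ _ hx', mul_div_assoc']
  congr 1
  simp only [zpow_neg, zpow_natCast]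
  field_simp
  ring

lemma D2_phiH (hq : q ≠ 0) (hb : b ≠ 0) (n x : ℕ)
    (ha : ∀ j ≤ x, 1 - a * q * q ^ j ≠ 0) :
    D2 q a b n (phiH q a b n) x = qHahnEigenvalue q a b n * phiH q a b n x := by
  have hq' : (q : ℂ) ≠ 0 := by exact_mod_cast hq
  have e := phiH_succ a b hq hb n x (ha x le_rfl)
  rcases x with _ | y
  · simp only [qHahnEigenvalue, D2, zpow_sub₀ hq', zpow_neg, zpow_natCast] at e ⊢
    field_simp
    linear_combination ((q : ℂ) ^ n - 1) * e
  · have h0 : (1 - a * q * q ^ y : ℂ) ≠ 0 := by exact_mod_cast ha y (by omega)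
    have e0 := phiH_succ a b hq hb n y (ha y (by omega))
    simp only [qHahnEigenvalue, D2, zpow_sub₀ hq', zpow_neg, zpow_natCast, Nat.add_sub_cancel]
      at e ⊢
    field_simp
    -- after multiplying by `1 - αq^{y+1}`, the two recurrences turn both sides into
    -- multiples of `φ_n(y)`
    apply mul_left_cancel₀ h0
    linear_combination (1 - a * q * q ^ y) * (q ^ n - q ^ (y + 1)) * e
      + ((q ^ n - q ^ (y + 1)) * a * q * (b * q ^ n - q ^ (y + 1))
        - (1 - a * q ^ (y + 1 + 1)) * (q ^ n - q ^ (y + 1))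
        - a * (1 - q ^ (y + 1)) * (q * q ^ n * b - q ^ (y + 1))
        - (1 - (q : ℂ) ^ n) * (1 - a * b * q ^ (n + 1))) * e0

lemma D2_R2Iter_phiH (hq : q ≠ 0) (hb : b ≠ 0) (n k x : ℕ)
    (ha : ∀ j ≤ x, 1 - a * q * q ^ j ≠ 0) :
    D2 q a b (n + k) (R2Iter q n k (phiH q a b n)) x =
      qHahnEigenvalue q a b n * R2Iter q n k (phiH q a b n) x := by
  induction k generalizing x with
  | zero => exact D2_phiH a b hq hb n x ha
  | succ k ih =>
    rw [R2Iter, ← add_assoc, D2_succ_R2 a b _ hq,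
      R2_congr _ fun y hy => ih y fun j hj => ha j (hj.trans hy), R2_const_mul]

lemma qHahnQ_add (n k : ℕ) :
    qHahnQ q a b n (n + k) = fun x =>
      (q : ℂ) ^ (k * (k + 1) / 2) / ((qPoch q q k : ℝ) : ℂ) *
        R2Iter q n k (phiH q a b n) x := by
  unfold qHahnQ
  rw [Nat.add_sub_cancel_left]

lemma D2_qHahnQ (hq : q ≠ 0) (hb : b ≠ 0) {n N : ℕ} (hnN : n ≤ N) (x : ℕ)
    (ha : ∀ j ≤ x, 1 - a * q * q ^ j ≠ 0) :
    D2 q a b N (qHahnQ q a b n N) x = qHahnEigenvalue q a b n * qHahnQ q a b n N x := by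
  obtain ⟨k, rfl⟩ := Nat.exists_eq_add_of_le hnN
  rw [qHahnQ_add, D2_const_mul, D2_R2Iter_phiH a b hq hb n k x ha]
  ring

lemma qHahnQ_succ (n m : ℕ) (hP : qPoch q q (m + 1) ≠ 0) (x : ℕ) :
    qHahnQ q a b n (n + m + 1) x =
      (q : ℂ) ^ (m + 1) / (1 - (q : ℂ) ^ (m + 1)) *
        R2 q (n + m) (qHahnQ q a b n (n + m)) x := by
  have hP' : ((qPoch q q m : ℝ) : ℂ) * (1 - q ^ (m + 1)) ≠ 0 := by
    rw [qPoch_succ, ← pow_succ'] at hP; exact_mod_cast hP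
  have htri : (m + 1) * (m + 1 + 1) / 2 = m * (m + 1) / 2 + (m + 1) := by
    rw [show (m + 1) * (m + 1 + 1) = m * (m + 1) + 2 * (m + 1) by ring,
      Nat.add_mul_div_left _ _ two_pos]
  rw [add_assoc, qHahnQ_add, qHahnQ_add]
  simp only [R2Iter, R2_const_mul, qPoch_succ, htri, pow_add, ← pow_succ']
  push_cast
  field_simp

end Eigenfunctions

lemma one_sub_mul_mul_pow_ne_zero {q a : ℝ} (hq0 : 0 < q) (hq1 : q < 1) (ha : 0 < a) {N : ℕ}
    (h : a < q⁻¹ ∨ q ^ (-(N : ℤ) - 1) < a) (j : ℕ) (hj : j ≤ N) :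
    1 - a * q * q ^ j ≠ 0 := by
  rcases h with h | h
  · have : a * q * q ^ j ≤ a * q :=
      mul_le_of_le_one_right (by positivity) (pow_le_one₀ hq0.le hq1.le)
    have : a * q < 1 := calc
      a * q < q⁻¹ * q := by gcongr
      _ = 1 := inv_mul_cancel₀ hq0.ne'
    linarith
  · rw [show -(N : ℤ) - 1 = -((N + 1 : ℕ) : ℤ) by push_cast; ring, zpow_neg, zpow_natCast,
      inv_lt_iff_one_lt_mul₀ (pow_pos hq0 _)] at h
    have : q ^ (N + 1) ≤ q * q ^ j := by
      rw [← pow_succ']; exact pow_le_pow_of_le_one hq0.le hq1.le (by omega)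
    nlinarith

theorem stmt9 (q : ℝ) (hq0 : 0 < q) (hq1 : q < 1) (a b : ℝ) (ha : 0 < a) (hb : 0 < b)
    (n N : ℕ) (hnN : n ≤ N)
    (hparam : (a < q⁻¹ ∧ b < q⁻¹) ∨
      ((q : ℝ) ^ (-(N : ℤ) - 1) < a ∧ (q : ℝ) ^ (-(N : ℤ) - 1) < b)) :
    (n + 1 ≤ N → ∀ x ≤ N,
      R2 q (N - 1) (qHahnQ q a b n (N - 1)) x =
        ((q : ℂ) ^ ((n : ℤ) - N) - 1) * qHahnQ q a b n N x) ∧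
    (∀ x ≤ N,
      L2 q a b (N + 1) (qHahnQ q a b n (N + 1)) x =
        (q : ℂ) ^ (-(n : ℤ)) * ((a : ℂ) * (b : ℂ) * (q : ℂ) ^ (N + n + 2) - 1) *
          qHahnQ q a b n N x) ∧
    (∀ x ≤ N,
      D2 q a b N (qHahnQ q a b n N) x =
        (q : ℂ) ^ (-(n : ℤ)) * (1 - (q : ℂ) ^ n) *
          (1 - (a : ℂ) * (b : ℂ) * (q : ℂ) ^ (n + 1)) * qHahnQ q a b n N x) := by
  have hq : q ≠ 0 := hq0.ne'
  have hq' : (q : ℂ) ≠ 0 := by exact_mod_cast hq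
  have hP : ∀ k, qPoch q q k ≠ 0 := fun k => (qPoch_self_pos hq0.le hq1 k).ne'
  have hqk : ∀ k, (1 : ℂ) - (q : ℂ) ^ (k + 1) ≠ 0 := fun k => by
    exact_mod_cast (sub_pos.2 (pow_lt_one₀ hq0.le hq1 k.succ_ne_zero)).ne'
  have haN : ∀ j ≤ N, 1 - a * q * q ^ j ≠ 0 :=
    one_sub_mul_mul_pow_ne_zero hq0 hq1 ha (hparam.imp And.left And.left)
  have hD : ∀ x ≤ N,
      D2 q a b N (qHahnQ q a b n N) x = qHahnEigenvalue q a b n * qHahnQ q a b n N x :=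
    fun x hx => D2_qHahnQ a b hq hb.ne' hnN x fun j hj => haN j (hj.trans hx)
  obtain ⟨m, rfl⟩ := Nat.exists_eq_add_of_le hnN
  refine ⟨?_, ?_, hD⟩
  · rintro hm x -
    obtain ⟨m, rfl⟩ : ∃ m', m = m' + 1 := ⟨m - 1, by omega⟩
    rw [show n + (m + 1) - 1 = n + m by omega, ← add_assoc, qHahnQ_succ a b n m (hP _),
      show (n : ℤ) - ((n + m + 1 : ℕ) : ℤ) = -((m + 1 : ℕ) : ℤ) by push_cast; ring,
      zpow_neg, zpow_natCast]
    field_simp [hqk m]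
  · intro x hx
    rw [funext (qHahnQ_succ a b n m (hP _)), L2_const_mul, L2_succ_R2 _ _ _ hq, hD x hx]
    simp only [qHahnEigenvalue, zpow_sub₀ hq', zpow_neg, zpow_natCast, zpow_one]
    field_simp [hqk m]
    ring
end
end

section
/- Let 1≤t≤h−1 and N≥0. Suppose given f'_M, g'_M∈V_{t,M} and f''_K, g''_K∈V_{h−t,K} for 0≤M,K≤N, and complex-valued functions ψ, φ on {0,…,N}×{0,…,N}, and define f_N, g_N∈V_{h,N} by f_N(x)=ψ(X_t,N−X_t)·f'_{X_t}(x')·f''_{N−X_t}(x'') and g_N(x)=φ(X_t,N−X_t)·g'_{X_t}(x')·g''_{N−X_t}(x''). Then ⟨f_N,g_N⟩_{V_{h,N}} = ∑_{M=0}^{N} (A_t q^{M+t})^{N−M} · ⟨f'_M,g'_M⟩_{V_{t,M}} · ⟨f''_{N−M},g''_{N−M}⟩_{V_{h−t,N−M}} · ψ(M,N−M)·conj(φ(M,N−M)). -/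
open Finset

noncomputable section

/-- Partial sum `X_k = x_1 + ⋯ + x_k` (entries of index `< k`, 0-indexed). -/
def Xlt {h : ℕ} (x : Fin h → ℕ) (k : ℕ) : ℕ := ∑ j : Fin h, if (j : ℕ) < k then x j else 0

/-- Partial product `A_k = α_1 ⋯ α_k` (entries of index `< k`, 0-indexed). -/
def Apar {h : ℕ} (α : Fin h → ℝ) (k : ℕ) : ℝ := ∏ j : Fin h, if (j : ℕ) < k then α j else 1

/-- Raising operator `R_N : V_{h,N} → V_{h,N+1}`. -/
def Rop (q : ℝ) {h : ℕ} (N : ℕ) (f : (Fin h → ℕ) → ℂ) : (Fin h → ℕ) → ℂ := fun x =>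
  ∑ i : Fin h, (q : ℂ) ^ ((Xlt x i : ℤ) - N - 1) * (1 - (q : ℂ) ^ (x i)) *
    f (Function.update x i (x i - 1))

/-- Lowering operator `L_N : V_{h,N} → V_{h,N-1}` (its defining formula does not involve `N`). -/
def Lop (q : ℝ) {h : ℕ} (α : Fin h → ℝ) (f : (Fin h → ℕ) → ℂ) : (Fin h → ℕ) → ℂ := fun x =>
  ∑ j : Fin h, ((Apar α j : ℝ) : ℂ) * (q : ℂ) ^ ((j : ℕ) + Xlt x j) *
    ((α j : ℂ) * (q : ℂ) ^ (x j + 1) - 1) * f (Function.update x j (x j + 1))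

/-- The multidimensional q-Hahn operator `D_N : V_{h,N} → V_{h,N}`. -/
def Dop (q : ℝ) {h : ℕ} (α : Fin h → ℝ) (N : ℕ) (f : (Fin h → ℕ) → ℂ) : (Fin h → ℕ) → ℂ :=
  fun x =>
    (∑ i : Fin h, ∑ j : Fin h,
      if i ≠ j then
        ((Apar α j : ℝ) : ℂ) *
          (q : ℂ) ^ ((((j : ℕ) + Xlt x j + Xlt x i : ℕ) : ℤ) - N -
            (if (i : ℕ) < (j : ℕ) then 1 else 0)) *
          ((α j : ℂ) * (q : ℂ) ^ (x j + 1) - 1) * (1 - (q : ℂ) ^ (x i)) *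
          f (Function.update (Function.update x j (x j + 1)) i (x i - 1))
      else 0)
    + ((∑ j : Fin h,
          ((Apar α j : ℝ) : ℂ) * (q : ℂ) ^ ((((j : ℕ) + 2 * Xlt x j : ℕ) : ℤ) - N) *
            ((α j : ℂ) * (q : ℂ) ^ (x j) - 1) * (1 - (q : ℂ) ^ (x j)))
        + (((Apar α h : ℝ) : ℂ) * (q : ℂ) ^ (((h + N : ℕ) : ℤ) - 1) - 1) *
            (1 - (q : ℂ) ^ (-(N : ℤ)))) * f x

/-- Scalar product on `V_{h,N}`. -/
def innerV (q : ℝ) {h : ℕ} (α : Fin h → ℝ) (N : ℕ) (f g : (Fin h → ℕ) → ℂ) : ℂ :=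
  (q : ℂ) ^ (N * (N + 1) / 2) *
    ∑ x ∈ Finset.Nat.antidiagonalTuple h N,
      (∏ i : Fin h, ((qPoch q (q * α i) (x i) / qPoch q q (x i) : ℝ) : ℂ) *
        ((α i * q : ℝ) : ℂ) ^ ((N : ℤ) - Xlt x ((i : ℕ) + 1))) *
      f x * (starRingEnd ℂ) (g x)

/-- `RopIter q n k f = R_{n+k-1} ⋯ R_{n+1} R_n f`. -/
def RopIter (q : ℝ) {h : ℕ} (n : ℕ) : ℕ → ((Fin h → ℕ) → ℂ) → ((Fin h → ℕ) → ℂ)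
  | 0, f => f
  | k + 1, f => Rop q (n + k) (RopIter q n k f)

/-- The left block `x' = (x_1, …, x_t)` of a tuple `x` (used only when `t ≤ h`). -/
def xL (h t : ℕ) (x : Fin h → ℕ) : Fin t → ℕ := fun i =>
  if hi : (i : ℕ) < h then x ⟨i, hi⟩ else 0

/-- The right block `x'' = (x_{t+1}, …, x_h)` of a tuple `x`. -/
def xR (h t : ℕ) (x : Fin h → ℕ) : Fin (h - t) → ℕ := fun i =>
  if hi : t + (i : ℕ) < h then x ⟨t + i, hi⟩ else 0

/-- The left block `(α_1, …, α_t)` of the parameters (used only when `t ≤ h`). -/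
def alphaL (h t : ℕ) (α : Fin h → ℝ) : Fin t → ℝ := fun i =>
  if hi : (i : ℕ) < h then α ⟨i, hi⟩ else 1

/-- The right block `(α_{t+1}, …, α_h)` of the parameters. -/
def alphaR (h t : ℕ) (α : Fin h → ℝ) : Fin (h - t) → ℝ := fun i =>
  if hi : t + (i : ℕ) < h then α ⟨t + i, hi⟩ else 1

/-- Combine two tuples into one of length `h`, splitting at `t`. -/
def comb (h t : ℕ) (y : Fin t → ℕ) (z : Fin (h - t) → ℕ) : Fin h → ℕ := fun i =>
  if hi : (i : ℕ) < t then y ⟨i, hi⟩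
  else if hi2 : (i : ℕ) - t < h - t then z ⟨(i : ℕ) - t, hi2⟩ else 0

lemma split_sum {β : Type*} [AddCommMonoid β] {h t : ℕ} (ht : t ≤ h) (g : Fin h → β) :
    ∑ j, g j = (∑ j : Fin t, g ⟨j, lt_of_lt_of_le j.isLt ht⟩)
      + ∑ j : Fin (h - t), g ⟨t + j, by have := j.isLt; omega⟩ := by
  have e : h = t + (h - t) := by omega
  have h1 : ∑ j : Fin h, g j = ∑ j : Fin (t + (h - t)), g (Fin.cast e.symm j) :=
    (Fintype.sum_equiv (finCongr e.symm) _ _ fun j => rfl).symm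
  rw [h1, Fin.sum_univ_add]
  congr 1

lemma split_prod {β : Type*} [CommMonoid β] {h t : ℕ} (ht : t ≤ h) (g : Fin h → β) :
    ∏ j, g j = (∏ j : Fin t, g ⟨j, lt_of_lt_of_le j.isLt ht⟩)
      * ∏ j : Fin (h - t), g ⟨t + j, by have := j.isLt; omega⟩ := by
  have e : h = t + (h - t) := by omega
  have h1 : ∏ j : Fin h, g j = ∏ j : Fin (t + (h - t)), g (Fin.cast e.symm j) :=
    (Fintype.prod_equiv (finCongr e.symm) _ _ fun j => rfl).symm
  rw [h1, Fin.prod_univ_add]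
  congr 1
section Aux
variable {h t : ℕ}

lemma xL_comb (ht : t ≤ h) (y : Fin t → ℕ) (z : Fin (h - t) → ℕ) :
    xL h t (comb h t y z) = y := by
  funext i
  have hi : (i : ℕ) < h := lt_of_lt_of_le i.isLt ht
  simp [xL, comb, hi, i.isLt]

lemma xR_comb (ht : t ≤ h) (y : Fin t → ℕ) (z : Fin (h - t) → ℕ) :
    xR h t (comb h t y z) = z := by
  funext i
  have hi : t + (i : ℕ) < h := by have := i.isLt; omega
  have h2 : ¬ (t + (i : ℕ) < t) := by omega
  have h3 : t + (i : ℕ) - t = (i : ℕ) := by omega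
  simp only [xR, hi, dif_pos, comb, h2, dif_neg, not_false_iff, h3, i.isLt, Fin.eta]

lemma comb_xLxR (ht : t ≤ h) (x : Fin h → ℕ) : comb h t (xL h t x) (xR h t x) = x := by
  funext i
  by_cases hi : (i : ℕ) < t
  · simp [comb, hi, xL, lt_of_lt_of_le hi ht]
  · have h2 : (i : ℕ) - t < h - t := by have := i.isLt; omega
    have h3 : t + ((i : ℕ) - t) < h := by have := i.isLt; omega
    have h4 : t + ((i : ℕ) - t) = (i : ℕ) := by omega
    simp only [comb, hi, dif_neg, not_false_iff, h2, dif_pos, xR, h3]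
    congr 1
    exact Fin.ext h4

lemma Xlt_comb_le (ht : t ≤ h) (y : Fin t → ℕ) (z : Fin (h - t) → ℕ) {k : ℕ} (hk : k ≤ t) :
    Xlt (comb h t y z) k = Xlt y k := by
  rw [Xlt, split_sum ht]
  have h2 : ∀ j : Fin (h - t), (if t + (j : ℕ) < k then comb h t y z ⟨t + j, by have := j.isLt; omega⟩ else 0) = 0 := by
    intro j; rw [if_neg]; omega
  rw [Finset.sum_congr rfl (fun j _ => h2 j), Finset.sum_const_zero, add_zero, Xlt]
  apply Finset.sum_congr rfl
  intro j _
  by_cases hj : (j : ℕ) < k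
  · rw [if_pos hj, if_pos hj]
    simp [comb, lt_of_lt_of_le hj hk]
  · rw [if_neg hj, if_neg hj]

lemma Xlt_comb_add (ht : t ≤ h) (y : Fin t → ℕ) (z : Fin (h - t) → ℕ) (k : ℕ) :
    Xlt (comb h t y z) (t + k) = (∑ i, y i) + Xlt z k := by
  rw [Xlt, split_sum ht]
  congr 1
  · apply Finset.sum_congr rfl
    intro j _
    have hj : (j : ℕ) < t + k := by have := j.isLt; omega
    rw [if_pos hj]
    simp [comb, j.isLt]
  · rw [Xlt]
    apply Finset.sum_congr rfl
    intro j _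
    have h2 : ¬ (t + (j : ℕ) < t) := by omega
    have h3 : t + (j : ℕ) - t = (j : ℕ) := by omega
    have h4 : (t + (j : ℕ) < t + k) ↔ ((j : ℕ) < k) := by omega
    simp only [comb, h2, dif_neg, not_false_iff, h3, j.isLt, dif_pos, Fin.eta, h4]

lemma Xlt_all {n : ℕ} (x : Fin n → ℕ) {k : ℕ} (hk : n ≤ k) : Xlt x k = ∑ i, x i := by
  rw [Xlt]
  apply Finset.sum_congr rfl
  intro j _
  rw [if_pos (lt_of_lt_of_le j.isLt hk)]

lemma sum_comb (ht : t ≤ h) (y : Fin t → ℕ) (z : Fin (h - t) → ℕ) :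
    ∑ i, comb h t y z i = (∑ i, y i) + ∑ i, z i := by
  have := Xlt_comb_add ht y z (h - t)
  rwa [Xlt_all _ (by omega), Xlt_all _ le_rfl] at this

lemma sum_xL (ht : t ≤ h) (x : Fin h → ℕ) : ∑ i, xL h t x i = Xlt x t := by
  rw [Xlt, split_sum ht (g := fun j : Fin h => if (j : ℕ) < t then x j else 0)]
  have h2 : ∀ j : Fin (h - t),
      (if ((⟨t + (j : ℕ), by have := j.isLt; omega⟩ : Fin h) : ℕ) < t then x ⟨t + j, by have := j.isLt; omega⟩ else 0) = 0 := by
    intro j; rw [if_neg]; simp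
  rw [Finset.sum_congr rfl (fun j _ => h2 j), Finset.sum_const_zero, add_zero]
  apply Finset.sum_congr rfl
  intro j _
  rw [if_pos j.isLt]
  simp [xL, lt_of_lt_of_le j.isLt ht]

lemma sum_xR (ht : t ≤ h) (x : Fin h → ℕ) : Xlt x t + ∑ i, xR h t x i = ∑ i, x i := by
  rw [← sum_xL ht x, split_sum ht (g := x)]
  congr 1
  · apply Finset.sum_congr rfl
    intro j _
    simp [xL, lt_of_lt_of_le j.isLt ht]
  · apply Finset.sum_congr rfl
    intro j _
    have hj : t + (j : ℕ) < h := by have := j.isLt; omega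
    simp [xR, hj]

lemma Apar_eq_prod (ht : t ≤ h) (α : Fin h → ℝ) :
    Apar α t = ∏ i : Fin t, alphaL h t α i := by
  rw [Apar, split_prod ht (g := fun j : Fin h => if (j : ℕ) < t then α j else 1)]
  have h2 : ∀ j : Fin (h - t),
      (if ((⟨t + (j : ℕ), by have := j.isLt; omega⟩ : Fin h) : ℕ) < t then α ⟨t + j, by have := j.isLt; omega⟩ else 1) = 1 := by
    intro j; rw [if_neg]; simp
  rw [Finset.prod_congr rfl (fun j _ => h2 j), Finset.prod_const_one, mul_one]
  apply Finset.prod_congr rfl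
  intro j _
  rw [if_pos j.isLt]
  simp [alphaL, lt_of_lt_of_le j.isLt ht]

end Aux

lemma tri' (a b c d : ℕ) (ha : 2 ∣ a) (hb : 2 ∣ b) (e : d = a + b + 2 * c) :
    d / 2 = a / 2 + b / 2 + c := by omega

lemma tri_add (M K : ℕ) : (M + K) * ((M + K) + 1) / 2 = M * (M + 1) / 2 + K * (K + 1) / 2 + M * K :=
  tri' _ _ _ _ (Nat.even_mul_succ_self M).two_dvd (Nat.even_mul_succ_self K).two_dvd (by ring)
lemma Xlt_le_sum {n : ℕ} (x : Fin n → ℕ) (k : ℕ) : Xlt x k ≤ ∑ i, x i := by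
  apply Finset.sum_le_sum
  intro j _
  split <;> simp

lemma sum_AT_split {β : Type*} [AddCommMonoid β] {h t : ℕ} (ht : t ≤ h) (N : ℕ)
    (g : (Fin h → ℕ) → β) :
    ∑ x ∈ Finset.Nat.antidiagonalTuple h N, g x
      = ∑ M ∈ Finset.range (N + 1), ∑ y ∈ Finset.Nat.antidiagonalTuple t M,
          ∑ z ∈ Finset.Nat.antidiagonalTuple (h - t) (N - M), g (comb h t y z) := by
  have step : ∀ M ∈ Finset.range (N + 1),
      (∑ y ∈ Finset.Nat.antidiagonalTuple t M,
        ∑ z ∈ Finset.Nat.antidiagonalTuple (h - t) (N - M), g (comb h t y z))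
      = ∑ p ∈ Finset.Nat.antidiagonalTuple t M ×ˢ Finset.Nat.antidiagonalTuple (h - t) (N - M),
          g (comb h t p.1 p.2) := fun M _ => by rw [Finset.sum_product]
  rw [Finset.sum_congr rfl step, Finset.sum_sigma']
  apply Finset.sum_nbij' (i := fun x => ⟨Xlt x t, (xL h t x, xR h t x)⟩)
    (j := fun p => comb h t p.2.1 p.2.2)
  · intro x hx
    rw [Finset.Nat.mem_antidiagonalTuple] at hx
    simp only [Finset.mem_sigma, Finset.mem_range, Finset.mem_product,
      Finset.Nat.mem_antidiagonalTuple]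
    have h1 := Xlt_le_sum x t
    have h2 := sum_xR ht x
    have h3 := sum_xL ht x
    refine ⟨by omega, h3, by omega⟩
  · intro p hp
    rw [Finset.mem_sigma, Finset.mem_range, Finset.mem_product,
      Finset.Nat.mem_antidiagonalTuple, Finset.Nat.mem_antidiagonalTuple] at hp
    rw [Finset.Nat.mem_antidiagonalTuple, sum_comb ht]
    omega
  · intro x _
    exact comb_xLxR ht x
  · intro p hp
    rw [Finset.mem_sigma, Finset.mem_range, Finset.mem_product,
      Finset.Nat.mem_antidiagonalTuple, Finset.Nat.mem_antidiagonalTuple] at hp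
    have h1 : Xlt (comb h t p.2.1 p.2.2) t = p.1 := by
      rw [Xlt_comb_le ht _ _ le_rfl, Xlt_all _ le_rfl, hp.2.1]
    exact Sigma.ext h1 (heq_of_eq (Prod.ext (xL_comb ht _ _) (xR_comb ht _ _)))
  · intro x _
    rw [comb_xLxR ht x]
lemma const_pow_split {h t : ℕ} (ht : t ≤ h) (q : ℝ) (α : Fin h → ℝ) (K : ℕ) :
    ((Apar α t * q ^ t : ℝ) : ℂ) ^ K = ∏ i : Fin t, ((alphaL h t α i * q : ℝ) : ℂ) ^ K := by
  rw [Finset.prod_pow]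
  congr 1
  push_cast
  rw [Apar_eq_prod ht]
  push_cast
  rw [Finset.prod_mul_distrib, Finset.prod_const]
  simp

lemma weight_split {h t : ℕ} (ht : t ≤ h) {q : ℝ} (hq0 : 0 < q) (α : Fin h → ℝ)
    (hα : ∀ i, 0 < α i) (M K : ℕ) (y : Fin t → ℕ) (z : Fin (h - t) → ℕ)
    (hy : ∑ i, y i = M) :
    (∏ i : Fin h, ((qPoch q (q * α i) (comb h t y z i) / qPoch q q (comb h t y z i) : ℝ) : ℂ) *
        ((α i * q : ℝ) : ℂ) ^ (((M + K : ℕ) : ℤ) - Xlt (comb h t y z) ((i : ℕ) + 1)))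
    = ((Apar α t * q ^ t : ℝ) : ℂ) ^ K *
      (∏ i : Fin t, ((qPoch q (q * alphaL h t α i) (y i) / qPoch q q (y i) : ℝ) : ℂ) *
        ((alphaL h t α i * q : ℝ) : ℂ) ^ ((M : ℤ) - Xlt y ((i : ℕ) + 1))) *
      ∏ i : Fin (h - t), ((qPoch q (q * alphaR h t α i) (z i) / qPoch q q (z i) : ℝ) : ℂ) *
        ((alphaR h t α i * q : ℝ) : ℂ) ^ ((K : ℤ) - Xlt z ((i : ℕ) + 1)) := by
  rw [split_prod ht]
  have left : ∀ i : Fin t,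
      ((qPoch q (q * α ⟨(i : ℕ), lt_of_lt_of_le i.isLt ht⟩)
          (comb h t y z ⟨(i : ℕ), lt_of_lt_of_le i.isLt ht⟩) /
        qPoch q q (comb h t y z ⟨(i : ℕ), lt_of_lt_of_le i.isLt ht⟩) : ℝ) : ℂ) *
        ((α ⟨(i : ℕ), lt_of_lt_of_le i.isLt ht⟩ * q : ℝ) : ℂ) ^
          (((M + K : ℕ) : ℤ) - Xlt (comb h t y z) (((⟨(i : ℕ), lt_of_lt_of_le i.isLt ht⟩ : Fin h) : ℕ) + 1))
      = (((qPoch q (q * alphaL h t α i) (y i) / qPoch q q (y i) : ℝ) : ℂ) *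
          ((alphaL h t α i * q : ℝ) : ℂ) ^ ((M : ℤ) - Xlt y ((i : ℕ) + 1))) *
          ((alphaL h t α i * q : ℝ) : ℂ) ^ K := by
    intro i
    have e1 : comb h t y z ⟨(i : ℕ), lt_of_lt_of_le i.isLt ht⟩ = y i := by
      simp [comb, i.isLt]
    have e2 : alphaL h t α i = α ⟨(i : ℕ), lt_of_lt_of_le i.isLt ht⟩ := by
      simp [alphaL, lt_of_lt_of_le i.isLt ht]
    have e3 : Xlt (comb h t y z) (((⟨(i : ℕ), lt_of_lt_of_le i.isLt ht⟩ : Fin h) : ℕ) + 1)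
        = Xlt y ((i : ℕ) + 1) := Xlt_comb_le ht y z i.isLt
    have hne : ((α ⟨(i : ℕ), lt_of_lt_of_le i.isLt ht⟩ * q : ℝ) : ℂ) ≠ 0 := by
      rw [Complex.ofReal_ne_zero]
      exact (mul_pos (hα _) hq0).ne'
    have e4 : ((M + K : ℕ) : ℤ) - (Xlt y ((i : ℕ) + 1) : ℤ)
        = ((M : ℤ) - Xlt y ((i : ℕ) + 1)) + (K : ℤ) := by push_cast; ring
    rw [e1, e2, e3, e4, zpow_add₀ hne, zpow_natCast]
    ring
  rw [Finset.prod_congr rfl (fun i _ => left i), Finset.prod_mul_distrib,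
    ← const_pow_split ht]
  have right : ∀ j : Fin (h - t),
      ((qPoch q (q * α ⟨t + (j : ℕ), by have := j.isLt; omega⟩)
          (comb h t y z ⟨t + (j : ℕ), by have := j.isLt; omega⟩) /
        qPoch q q (comb h t y z ⟨t + (j : ℕ), by have := j.isLt; omega⟩) : ℝ) : ℂ) *
        ((α ⟨t + (j : ℕ), by have := j.isLt; omega⟩ * q : ℝ) : ℂ) ^
          (((M + K : ℕ) : ℤ) - Xlt (comb h t y z) (((⟨t + (j : ℕ), by have := j.isLt; omega⟩ : Fin h) : ℕ) + 1))
      = ((qPoch q (q * alphaR h t α j) (z j) / qPoch q q (z j) : ℝ) : ℂ) *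
          ((alphaR h t α j * q : ℝ) : ℂ) ^ ((K : ℤ) - Xlt z ((j : ℕ) + 1)) := by
    intro j
    have hj : t + (j : ℕ) < h := by have := j.isLt; omega
    have e1 : comb h t y z ⟨t + (j : ℕ), hj⟩ = z j := by
      have h2 : ¬ (t + (j : ℕ) < t) := by omega
      have h3 : t + (j : ℕ) - t = (j : ℕ) := by omega
      simp only [comb, h2, dif_neg, not_false_iff, h3, j.isLt, dif_pos, Fin.eta]
    have e2 : alphaR h t α j = α ⟨t + (j : ℕ), hj⟩ := by
      simp [alphaR, hj]
    have e3 : Xlt (comb h t y z) (((⟨t + (j : ℕ), hj⟩ : Fin h) : ℕ) + 1)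
        = M + Xlt z ((j : ℕ) + 1) := by
      have e : ((⟨t + (j : ℕ), hj⟩ : Fin h) : ℕ) + 1 = t + ((j : ℕ) + 1) :=
        Nat.add_assoc t (j : ℕ) 1
      rw [e, Xlt_comb_add ht, hy]
    have e4 : ((M + K : ℕ) : ℤ) - ((M + Xlt z ((j : ℕ) + 1) : ℕ) : ℤ)
        = (K : ℤ) - Xlt z ((j : ℕ) + 1) := by push_cast; ring
    rw [e1, e2, e3, e4]
  rw [Finset.prod_congr rfl (fun j _ => right j)]
  ring
lemma double_factor {γ1 γ2 : Type*} (s1 : Finset γ1) (s2 : Finset γ2)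
    (a : γ1 → γ2 → ℂ) (c C0 b1 b2 d e : ℂ) (t1 : γ1 → ℂ) (t2 : γ2 → ℂ)
    (hkey : ∀ y ∈ s1, ∀ z ∈ s2, c * a y z = (C0 * b1 * b2 * d * e) * t1 y * t2 z) :
    c * ∑ y ∈ s1, ∑ z ∈ s2, a y z
      = C0 * (b1 * ∑ y ∈ s1, t1 y) * (b2 * ∑ z ∈ s2, t2 z) * d * e := by
  rw [Finset.mul_sum]
  have h1 : ∀ y ∈ s1, c * ∑ z ∈ s2, a y z
      = ((C0 * b1 * b2 * d * e) * t1 y) * ∑ z ∈ s2, t2 z := fun y hy => by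
    rw [Finset.mul_sum, Finset.sum_congr rfl (fun z hz => hkey y hy z hz), ← Finset.mul_sum]
  rw [Finset.sum_congr rfl h1, ← Finset.sum_mul, ← Finset.mul_sum]
  ring

theorem stmt15 (q : ℝ) (hq0 : 0 < q) (hq1 : q < 1) (h t : ℕ) (hh : 2 ≤ h)
    (ht1 : 1 ≤ t) (ht2 : t ≤ h - 1)
    (α : Fin h → ℝ) (hα : ∀ i, 0 < α i) (N : ℕ)
    (f' g' : ℕ → (Fin t → ℕ) → ℂ) (f'' g'' : ℕ → (Fin (h - t) → ℕ) → ℂ)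
    (ψ φ : ℕ → ℕ → ℂ) (F G : (Fin h → ℕ) → ℂ)
    (hF : ∀ x : Fin h → ℕ,
      F x = ψ (Xlt x t) ((∑ i, x i) - Xlt x t) * f' (Xlt x t) (xL h t x) *
        f'' ((∑ i, x i) - Xlt x t) (xR h t x))
    (hG : ∀ x : Fin h → ℕ,
      G x = φ (Xlt x t) ((∑ i, x i) - Xlt x t) * g' (Xlt x t) (xL h t x) *
        g'' ((∑ i, x i) - Xlt x t) (xR h t x)) :
    innerV q α N F G =
      ∑ M ∈ Finset.range (N + 1),
        ((Apar α t * q ^ (M + t) : ℝ) : ℂ) ^ (N - M) *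
          innerV q (alphaL h t α) M (f' M) (g' M) *
          innerV q (alphaR h t α) (N - M) (f'' (N - M)) (g'' (N - M)) *
          ψ M (N - M) * (starRingEnd ℂ) (φ M (N - M)) := by
  have ht : t ≤ h := by omega
  rw [innerV, sum_AT_split ht N, Finset.mul_sum]
  apply Finset.sum_congr rfl
  intro M hM
  rw [Finset.mem_range] at hM
  have hMN : M ≤ N := by omega
  have hMK : M + (N - M) = N := by omega
  have tri : N * (N + 1) / 2
      = M * (M + 1) / 2 + (N - M) * ((N - M) + 1) / 2 + M * (N - M) := by
    have h2 := tri_add M (N - M)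
    rw [hMK] at h2
    exact h2
  simp only [innerV]
  apply double_factor
  intro y hy z hz
  rw [Finset.Nat.mem_antidiagonalTuple] at hy hz
  -- basic facts about comb y z
  have hXt : Xlt (comb h t y z) t = M := by
    rw [Xlt_comb_le ht y z le_rfl, Xlt_all y le_rfl, hy]
  have hsum : ∑ i, comb h t y z i = N := by
    rw [sum_comb ht, hy, hz, hMK]
  have hFc : F (comb h t y z) = ψ M (N - M) * f' M y * f'' (N - M) z := by
    rw [hF, hXt, hsum, xL_comb ht, xR_comb ht]
  have hGc : G (comb h t y z) = φ M (N - M) * g' M y * g'' (N - M) z := by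
    rw [hG, hXt, hsum, xL_comb ht, xR_comb ht]
  have hW := weight_split ht hq0 α hα M (N - M) y z hy
  rw [hMK] at hW
  have hC : ((Apar α t * q ^ (M + t) : ℝ) : ℂ) ^ (N - M)
      = ((Apar α t * q ^ t : ℝ) : ℂ) ^ (N - M) * (q : ℂ) ^ (M * (N - M)) := by
    push_cast
    ring
  rw [hFc, hGc, hW, map_mul, map_mul, tri, pow_add, pow_add, hC]
  ring
end
end
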